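/- Let H, K₁, K₂, c be real constants with 1 + 12c > 0, and set B⁴(x₁,x₂) = (K₁ e^{(-1/6+√(1+12c)/6)x₁} + K₂ e^{(-1/6-√(1+12c)/6)x₁}) H e^{cx₂/2} and B³(x₁,x₂) = e^{x₁}(4/3 - 2e^{-x₂}∂₁B⁴(x₁,x₂)). Then the equation e^{-x₁}((3/2)∂₂B³ - (1/2)B³) + e^{-x₂}∂₂B⁴ - 4/3 = 0 fails to hold identically on ℝ²; i.e., there exist (x₁,x₂) where it is violated. -/

import Mathlib

open Real

/-- B⁴(x₁,x₂) = (K₁e^{(-1/6+√(1+12c)/6)x₁} + K₂e^{(-1/6-√(1+12c)/6)x₁})He^{cx₂/2}. -/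
noncomputable def B4 (H K₁ K₂ c x₁ x₂ : ℝ) : ℝ :=
  (K₁ * exp ((-1/6 + Real.sqrt (1 + 12 * c) / 6) * x₁)
    + K₂ * exp ((-1/6 - Real.sqrt (1 + 12 * c) / 6) * x₁)) * H * exp (c * x₂ / 2)

/-- B³(x₁,x₂) = e^{x₁}(4/3 - 2e^{-x₂}∂₁B⁴(x₁,x₂)). -/
noncomputable def B3 (H K₁ K₂ c x₁ x₂ : ℝ) : ℝ :=
  exp x₁ * (4/3 - 2 * exp (-x₂) * deriv (fun t => B4 H K₁ K₂ c t x₂) x₁)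

/-!
Both B⁴ and ∂₁B⁴ factor as a function of x₁ times H e^{cx₂/2}, so the left-hand side collapses
to `Q(x₁) e^{(c/2 - 1)x₂} - 2` for an explicit `Q`. If it vanished identically, then
`Q(x₁) e^{(c/2 - 1)x₂}` would be the nonzero constant 2, forcing `c = 2`. But for `c = 2` the
exponents are `2/3` and `-1`, the `e^{-x₁}` terms of `Q` cancel, and `Q(x₁) = (5/3) H K₁ e^{2x₁/3}`
is not constant either.
-/

noncomputable def expCombination (K₁ K₂ a b x : ℝ) : ℝ := K₁ * exp (a * x) + K₂ * exp (b * x)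

lemma hasDerivAt_exp_const_mul (k x : ℝ) :
    HasDerivAt (fun t => exp (k * t)) (k * exp (k * x)) x := by
  simpa [mul_comm] using ((hasDerivAt_id x).const_mul k).exp

lemma hasDerivAt_expCombination (K₁ K₂ a b x : ℝ) :
    HasDerivAt (expCombination K₁ K₂ a b) (expCombination (K₁ * a) (K₂ * b) a b x) x := by
  have h := ((hasDerivAt_exp_const_mul a x).const_mul K₁).add
    ((hasDerivAt_exp_const_mul b x).const_mul K₂)
  rw [expCombination, mul_assoc, mul_assoc]
  exact h

lemma exponent_eq_zero_of_mul_exp_eq {a k b : ℝ} (h : ∀ x, a * exp (k * x) = b) (hb : b ≠ 0) :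
    k = 0 := by
  have ha : a = b := by simpa using h 0
  have hk : exp k = 1 := by
    have h1 := h 1
    rw [ha, mul_one] at h1
    exact (mul_eq_left₀ hb).mp h1
  exact exp_eq_one_iff k |>.mp hk

noncomputable def rootPlus (c : ℝ) : ℝ := -1/6 + √(1 + 12 * c) / 6

noncomputable def rootMinus (c : ℝ) : ℝ := -1/6 - √(1 + 12 * c) / 6

noncomputable def profile (K₁ K₂ c : ℝ) : ℝ → ℝ :=
  expCombination K₁ K₂ (rootPlus c) (rootMinus c)

noncomputable def profileDeriv (K₁ K₂ c : ℝ) : ℝ → ℝ :=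
  expCombination (K₁ * rootPlus c) (K₂ * rootMinus c) (rootPlus c) (rootMinus c)

lemma B4_eq (H K₁ K₂ c x₁ x₂ : ℝ) :
    B4 H K₁ K₂ c x₁ x₂ = profile K₁ K₂ c x₁ * H * exp (c * x₂ / 2) :=
  rfl

lemma deriv_B4_fst (H K₁ K₂ c x₁ x₂ : ℝ) :
    deriv (fun t => B4 H K₁ K₂ c t x₂) x₁ = profileDeriv K₁ K₂ c x₁ * H * exp (c * x₂ / 2) := by
  simp only [B4_eq]
  exact (((hasDerivAt_expCombination _ _ _ _ x₁).mul_const H).mul_const _).deriv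

lemma deriv_B4_snd (H K₁ K₂ c x₁ x₂ : ℝ) :
    deriv (fun t => B4 H K₁ K₂ c x₁ t) x₂
      = profile K₁ K₂ c x₁ * H * (c / 2 * exp (c * x₂ / 2)) := by
  have h := (hasDerivAt_exp_const_mul (c / 2) x₂).const_mul (profile K₁ K₂ c x₁ * H)
  simp only [B4_eq, mul_div_right_comm c]
  exact h.deriv

lemma B3_eq (H K₁ K₂ c x₁ x₂ : ℝ) :
    B3 H K₁ K₂ c x₁ x₂
      = exp x₁ * (4/3) - 2 * exp x₁ * profileDeriv K₁ K₂ c x₁ * H * exp ((c/2 - 1) * x₂) := by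
  rw [B3, deriv_B4_fst, show (c/2 - 1) * x₂ = -x₂ + c * x₂ / 2 by ring, exp_add]
  ring

lemma deriv_B3_snd (H K₁ K₂ c x₁ x₂ : ℝ) :
    deriv (fun t => B3 H K₁ K₂ c x₁ t) x₂
      = -(2 * exp x₁ * profileDeriv K₁ K₂ c x₁ * H) * ((c/2 - 1) * exp ((c/2 - 1) * x₂)) := by
  simp only [B3_eq]
  rw [((hasDerivAt_exp_const_mul (c/2 - 1) x₂).const_mul _).const_sub _ |>.deriv]
  ring

noncomputable def obstructionCoeff (H K₁ K₂ c x₁ : ℝ) : ℝ :=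
  H * ((4 - 3 * c / 2) * profileDeriv K₁ K₂ c x₁ + c / 2 * profile K₁ K₂ c x₁)

lemma obstruction_eq (H K₁ K₂ c x₁ x₂ : ℝ) :
    exp (-x₁) * ((3/2) * deriv (fun t => B3 H K₁ K₂ c x₁ t) x₂
          - (1/2) * B3 H K₁ K₂ c x₁ x₂)
        + exp (-x₂) * deriv (fun t => B4 H K₁ K₂ c x₁ t) x₂ - 4/3
      = obstructionCoeff H K₁ K₂ c x₁ * exp ((c/2 - 1) * x₂) - 2 := by
  rw [deriv_B3_snd, deriv_B4_snd, B3_eq, obstructionCoeff,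
    show c * x₂ / 2 = x₂ + (c/2 - 1) * x₂ by ring, exp_add, exp_neg, exp_neg]
  field_simp
  ring

lemma obstructionCoeff_two (H K₁ K₂ x₁ : ℝ) :
    obstructionCoeff H K₁ K₂ 2 x₁ = 5/3 * H * K₁ * exp (2/3 * x₁) := by
  have hsqrt : √(1 + 12 * 2 : ℝ) = 5 := by
    rw [show (1 + 12 * 2 : ℝ) = 5 ^ 2 by norm_num, sqrt_sq (by norm_num)]
  simp only [obstructionCoeff, profile, profileDeriv, expCombination, rootPlus, rootMinus, hsqrt]
  norm_num
  ring

theorem obstruction_mu_zero_general (H K₁ K₂ c : ℝ) :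
    ∃ x₁ x₂ : ℝ,
      exp (-x₁) * ((3/2) * deriv (fun t => B3 H K₁ K₂ c x₁ t) x₂
          - (1/2) * B3 H K₁ K₂ c x₁ x₂)
        + exp (-x₂) * deriv (fun t => B4 H K₁ K₂ c x₁ t) x₂ - 4/3 ≠ 0 := by
  by_contra! h
  have hconst (x₁ x₂ : ℝ) : obstructionCoeff H K₁ K₂ c x₁ * exp ((c/2 - 1) * x₂) = 2 := by
    linarith [obstruction_eq H K₁ K₂ c x₁ x₂ ▸ h x₁ x₂]
  have hc : c = 2 := by
    linarith [exponent_eq_zero_of_mul_exp_eq (hconst 0) two_ne_zero]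
  subst hc
  have hx₁ : ∀ x₁, 5/3 * H * K₁ * exp (2/3 * x₁) = 2 := fun x₁ => by
    simpa [obstructionCoeff_two] using hconst x₁ 0
  norm_num at hx₁
  exact absurd (exponent_eq_zero_of_mul_exp_eq hx₁ two_ne_zero) (by norm_num)

/-- The obstruction equation
e^{-x₁}((3/2)∂₂B³ - (1/2)B³) + e^{-x₂}∂₂B⁴ - 4/3 = 0
fails to hold identically on ℝ². -/
theorem obstruction_mu_zero (H K₁ K₂ c : ℝ) (hc : 1 + 12 * c > 0) :
    ∃ x₁ x₂ : ℝ,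
      exp (-x₁) * ((3/2) * deriv (fun t => B3 H K₁ K₂ c x₁ t) x₂
          - (1/2) * B3 H K₁ K₂ c x₁ x₂)
        + exp (-x₂) * deriv (fun t => B4 H K₁ K₂ c x₁ t) x₂ - 4/3 ≠ 0 :=
  obstruction_mu_zero_general H K₁ K₂ c
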